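/- arXiv:0909.2277 — 2 statements merged into one kernel-verified Lean document; each statement's English description precedes it below -/
import Mathlib

section
/- For the logistic map L_r with 1 < r ≤ 4 and any m ≥ 2, there exists y ∈ [0,1] realizing the pattern m·1·2·⋯·(m−1); i.e., L_r(y) < L_r^2(y) < ⋯ < L_r^{m−1}(y) < y. -/
/-- The logistic map `L_r(x) = r x (1-x)`. -/
def logistic (r : ℝ) : ℝ → ℝ := fun x => r * x * (1 - x)

/-!
Below the fixed point `1 - 1/r` the logistic map pushes points up, and it grows them by a
factor of at most `r` per step. So a point `ε > 0` with `r^(m-2) ε < min (1 - 1/r) (1/2)` has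
an increasing orbit of length `m - 1` that stays below `1/2`. Since `L_r` maps `[1/2, 1]` onto
`[0, r/4]` and `ε ≤ r/4`, some `y ≥ 1/2` has `L_r y = ε`; its orbit realizes the pattern.
-/

lemma logistic_le_mul_self {r : ℝ} (hr : 0 ≤ r) (x : ℝ) : logistic r x ≤ r * x := by
  have : 0 ≤ r * x ^ 2 := by positivity
  simp only [logistic]
  nlinarith

lemma iterate_logistic_le {r : ℝ} (hr : 0 ≤ r) (x : ℝ) (k : ℕ) :
    (logistic r)^[k] x ≤ r ^ k * x := by
  induction k with
  | zero => simp
  | succ k ih =>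
    rw [Function.iterate_succ_apply']
    calc logistic r ((logistic r)^[k] x) ≤ r * (logistic r)^[k] x := logistic_le_mul_self hr _
      _ ≤ r * (r ^ k * x) := mul_le_mul_of_nonneg_left ih hr
      _ = r ^ (k + 1) * x := by ring

lemma logistic_pos {r x : ℝ} (hr : 0 < r) (hx : x ∈ Set.Ioo (0 : ℝ) 1) : 0 < logistic r x :=
  mul_pos (mul_pos hr hx.1) (sub_pos.mpr hx.2)

lemma lt_logistic {r x : ℝ} (hr : 0 < r) (hx : 0 < x) (hxr : x < 1 - 1 / r) :
    x < logistic r x := by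
  have h : 1 < (1 - x) * r := (div_lt_iff₀ hr).mp (by linarith)
  calc x = x * 1 := (mul_one x).symm
    _ < x * ((1 - x) * r) := mul_lt_mul_of_pos_left h hx
    _ = logistic r x := by simp only [logistic]; ring

section Orbit

variable {r x b : ℝ} {n : ℕ}

lemma iterate_logistic_mem_Ioo (hr : 1 ≤ r) (hb : b ≤ 1) (hx : 0 < x) (hxb : r ^ n * x < b)
    {k : ℕ} (hk : k ≤ n) : (logistic r)^[k] x ∈ Set.Ioo 0 b := by
  have hr0 : 0 < r := zero_lt_one.trans_le hr
  have hbound : ∀ j ≤ n, (logistic r)^[j] x < b := fun j hj =>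
    calc (logistic r)^[j] x ≤ r ^ j * x := iterate_logistic_le hr0.le x j
      _ ≤ r ^ n * x := mul_le_mul_of_nonneg_right (pow_le_pow_right₀ hr hj) hx.le
      _ < b := hxb
  induction k with
  | zero => exact ⟨hx, hbound 0 hk⟩
  | succ k ih =>
    obtain ⟨hpos, hlt⟩ := ih (by omega)
    refine ⟨?_, hbound (k + 1) hk⟩
    rw [Function.iterate_succ_apply']
    exact logistic_pos hr0 ⟨hpos, hlt.trans_le hb⟩

lemma iterate_logistic_lt_iterate_succ (hr : 1 ≤ r) (hb : b ≤ 1 - 1 / r) (hx : 0 < x)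
    (hxb : r ^ n * x < b) {k : ℕ} (hk : k ≤ n) :
    (logistic r)^[k] x < (logistic r)^[k + 1] x := by
  have hr0 : 0 < r := zero_lt_one.trans_le hr
  have hb1 : b ≤ 1 := hb.trans (sub_le_self 1 (by positivity))
  obtain ⟨hpos, hlt⟩ := iterate_logistic_mem_Ioo hr hb1 hx hxb hk
  rw [Function.iterate_succ_apply']
  exact lt_logistic hr0 hpos (hlt.trans_le hb)

end Orbit

lemma exists_mem_Icc_logistic_eq {r ε : ℝ} (hε : ε ∈ Set.Icc 0 (r / 4)) :
    ∃ y ∈ Set.Icc (1 / 2 : ℝ) 1, logistic r y = ε := by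
  have hcont : ContinuousOn (logistic r) (Set.Icc (1 / 2) 1) := by
    unfold logistic
    fun_prop
  refine intermediate_value_Icc' (by norm_num) hcont ?_
  simpa [logistic, show r * 2⁻¹ * (1 - 2⁻¹) = r / 4 by ring] using hε

theorem logistic_pattern_m1_allowed_general (r : ℝ) (hr1 : 1 < r)
    (m : ℕ) (hm : 2 ≤ m) :
    ∃ y ∈ Set.Icc (0 : ℝ) 1,
      (∀ i : ℕ, 1 ≤ i → i + 1 ≤ m - 1 →
        (logistic r)^[i] y < (logistic r)^[i + 1] y) ∧
      (logistic r)^[m - 1] y < y := by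
  have hr0 : 0 < r := one_pos.trans hr1
  set c : ℝ := min (1 - 1 / r) (1 / 2)
  have hc : 0 < c := lt_min (by rw [sub_pos, div_lt_one hr0]; exact hr1) (by norm_num)
  -- the fixed point `1 - 1/r` lies below the maximum `r/4` of the map
  have hcr : c ≤ r / 4 := (min_le_left _ _).trans <| by
    rw [one_sub_div hr0.ne', div_le_div_iff₀ hr0 (by norm_num)]
    nlinarith [sq_nonneg (r - 2)]
  set ε : ℝ := c / r ^ (m - 1)
  have hε : 0 < ε := by positivity
  have hεc : r ^ (m - 2) * ε < c :=
    calc r ^ (m - 2) * ε = c / r := by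
          simp only [ε]
          rw [show m - 1 = m - 2 + 1 by omega, pow_succ]
          field_simp
      _ < c := div_lt_self hc hr1
  have hεr : ε ≤ r / 4 := (div_le_self hc.le (one_le_pow₀ hr1.le)).trans hcr
  obtain ⟨y, hy, hfy⟩ := exists_mem_Icc_logistic_eq ⟨hε.le, hεr⟩
  refine ⟨y, ⟨by linarith [hy.1], hy.2⟩, fun i hi1 hi2 => ?_, ?_⟩
  · obtain ⟨j, rfl⟩ : ∃ j, i = j + 1 := ⟨i - 1, by omega⟩
    rw [Function.iterate_succ_apply, Function.iterate_succ_apply, hfy]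
    exact iterate_logistic_lt_iterate_succ hr1.le (min_le_left _ _) hε hεc (by omega)
  · rw [show m - 1 = m - 2 + 1 by omega, Function.iterate_succ_apply, hfy]
    calc (logistic r)^[m - 2] ε < c :=
          (iterate_logistic_mem_Ioo hr1.le (min_le_right _ _ |>.trans (by norm_num)) hε hεc
            le_rfl).2
      _ ≤ 1 / 2 := min_le_right _ _
      _ ≤ y := hy.1

/-- For `1 < r ≤ 4` and any `m ≥ 2`, there exists `y ∈ [0,1]` realizing the pattern
`m·1·2·⋯·(m-1)`, i.e. `L_r(y) < L_r²(y) < ⋯ < L_r^{m-1}(y) < y`. -/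
theorem logistic_pattern_m1_allowed (r : ℝ) (hr1 : 1 < r) (hr4 : r ≤ 4)
    (m : ℕ) (hm : 2 ≤ m) :
    ∃ y ∈ Set.Icc (0 : ℝ) 1,
      (∀ i : ℕ, 1 ≤ i → i + 1 ≤ m - 1 →
        (logistic r)^[i] y < (logistic r)^[i + 1] y) ∧
      (logistic r)^[m - 1] y < y :=
  logistic_pattern_m1_allowed_general r hr1 m hm
end

section
/- For the tent map Λ and n ≥ 4: if x ∈ [0,1] satisfies Λ(x) < Λ^2(x) < ⋯ < Λ^{n−3}(x) < x < Λ^{n−2}(x), then Λ^{n−1}(x) < Λ(x). Consequently the only pattern of length n extending these relations that can occur is (n−1)·2·3·⋯·(n−2)·n·1, and in particular the patterns (n−2)·1·2·⋯·(n−3)·(n−1)·n and (n−2)·1·2·⋯·(n−3)·n·(n−1) are forbidden for Λ. -/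
/-!
Since `Λ(x) ≤ Λ^{n-3}(x) < x`, the point `x` is moved to the left by `Λ`, which forces
`x ≥ 1/2`. On `[1/2, ∞)` the tent map is strictly decreasing, so `x < Λ^{n-2}(x)` gives
`Λ^{n-1}(x) < Λ(x) < x`; both forbidden patterns would need `x < Λ^{n-1}(x)`.
-/

noncomputable def tent : ℝ → ℝ := fun x => if x < 1 / 2 then 2 * x else 2 - 2 * x

lemma tent_of_lt_half {x : ℝ} (hx : x < 1 / 2) : tent x = 2 * x := if_pos hx

lemma tent_of_half_le {x : ℝ} (hx : 1 / 2 ≤ x) : tent x = 2 - 2 * x := if_neg hx.not_gt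

lemma strictAntiOn_tent : StrictAntiOn tent (Set.Ici (1 / 2)) := by
  intro x hx y _ hxy
  rw [tent_of_half_le hx, tent_of_half_le (hx.trans hxy.le)]
  linarith

lemma half_le_of_tent_lt_self {x : ℝ} (hx : 0 ≤ x) (h : tent x < x) : 1 / 2 ≤ x := by
  by_contra! hlt
  rw [tent_of_lt_half hlt] at h
  linarith

lemma le_of_forall_lt_succ {α : Type*} [Preorder α] {f : ℕ → α} {a b : ℕ} (hab : a ≤ b)
    (h : ∀ i, a ≤ i → i + 1 ≤ b → f i < f (i + 1)) : f a ≤ f b :=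
  monotoneOn_of_le_add_one Set.ordConnected_Icc
    (fun i _ hi hi' ↦ (h i hi.1 hi'.2).le) ⟨le_rfl, hab⟩ ⟨hab, le_rfl⟩ hab

lemma tent_iterate_add_two_lt {m : ℕ} (hm : 1 ≤ m) {x : ℝ} (hx : 0 ≤ x)
    (hchain : ∀ i, 1 ≤ i → i + 1 ≤ m → tent^[i] x < tent^[i + 1] x)
    (hlast : tent^[m] x < x) (hnext : x < tent^[m + 1] x) :
    tent^[m + 2] x < tent x ∧ tent x < x := by
  have hfirst : tent x ≤ tent^[m] x := le_of_forall_lt_succ (f := (tent^[·] x)) hm hchain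
  have hleft : tent x < x := hfirst.trans_lt hlast
  have hhalf : 1 / 2 ≤ x := half_le_of_tent_lt_self hx hleft
  refine ⟨?_, hleft⟩
  rw [Function.iterate_succ_apply']
  exact strictAntiOn_tent hhalf (hhalf.trans hnext.le) hnext

/-- For `n ≥ 4`: if `x ∈ [0,1]` satisfies
`Λ(x) < Λ²(x) < ⋯ < Λ^{n-3}(x) < x < Λ^{n-2}(x)`, then `Λ^{n-1}(x) < Λ(x)`.
Consequently the patterns `(n-2)·1·2·⋯·(n-3)·(n-1)·n` and
`(n-2)·1·2·⋯·(n-3)·n·(n-1)` are forbidden for `Λ`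
(in both of those patterns `x < Λ^{n-1}(x)`). -/
theorem tent_last_iterate_small (n : ℕ) (hn : 4 ≤ n) :
    (∀ x ∈ Set.Icc (0 : ℝ) 1,
      ((∀ i : ℕ, 1 ≤ i → i + 1 ≤ n - 3 → tent^[i] x < tent^[i + 1] x) ∧
        tent^[n - 3] x < x ∧ x < tent^[n - 2] x) →
      tent^[n - 1] x < tent x) ∧
    (¬ ∃ x ∈ Set.Icc (0 : ℝ) 1,
      (∀ i : ℕ, 1 ≤ i → i + 1 ≤ n - 3 → tent^[i] x < tent^[i + 1] x) ∧
      tent^[n - 3] x < x ∧ x < tent^[n - 2] x ∧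
      tent^[n - 2] x < tent^[n - 1] x) ∧
    (¬ ∃ x ∈ Set.Icc (0 : ℝ) 1,
      (∀ i : ℕ, 1 ≤ i → i + 1 ≤ n - 3 → tent^[i] x < tent^[i + 1] x) ∧
      tent^[n - 3] x < x ∧ x < tent^[n - 1] x ∧
      tent^[n - 1] x < tent^[n - 2] x) := by
  obtain ⟨m, rfl⟩ : ∃ m, n = m + 3 := ⟨n - 3, by omega⟩
  have hm : 1 ≤ m := by omega
  simp only [Nat.add_sub_cancel, show m + 3 - 2 = m + 1 by omega, show m + 3 - 1 = m + 2 by omega]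
  refine ⟨fun x hx ⟨hchain, hlast, hnext⟩ ↦
    (tent_iterate_add_two_lt hm hx.1 hchain hlast hnext).1, ?_, ?_⟩
  · rintro ⟨x, hx, hchain, hlast, hnext, hfinal⟩
    obtain ⟨hlt, hleft⟩ := tent_iterate_add_two_lt hm hx.1 hchain hlast hnext
    linarith
  · rintro ⟨x, hx, hchain, hlast, hfinal, hdrop⟩
    obtain ⟨hlt, hleft⟩ := tent_iterate_add_two_lt hm hx.1 hchain hlast (hfinal.trans hdrop)
    linarith
end
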